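/- arXiv:1201.1748 — 6 statements merged into one kernel-verified Lean document; each statement's English description precedes it below -/
import Mathlib

section
/- Let A be a unital algebra with an action α of C_n by algebra automorphisms such that the isotypic component A_1 = {a ∈ A : α(ζ)·a = ζ·a} contains an invertible element. Then the induced action of C_n on the set of nonzero algebra homomorphisms χ : A → ℂ, given by χ·ζ^k := χ ∘ α(ζ^k), is free: if χ ∘ α(ζ^l) = χ for some character χ and 0 ≤ l ≤ n−1, then l = 0. -/
open Complex

theorem AlgEquiv.pow_apply_of_apply_eq_smul {R A : Type*} [CommSemiring R] [Semiring A]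
    [Algebra R A] {f : A ≃ₐ[R] A} {a : A} {c : R} (h : f a = c • a) (m : ℕ) :
    (f ^ m) a = c ^ m • a := by
  induction m with
  | zero => simp
  | succ m ih => rw [pow_succ, AlgEquiv.mul_apply, h, map_smul, ih, smul_smul, pow_succ']

theorem MonoidHom.apply_ofAdd_natCast_of_apply_ofAdd_one {R A : Type*} [CommSemiring R]
    [Semiring A] [Algebra R A] {n : ℕ} (α : Multiplicative (ZMod n) →* (A ≃ₐ[R] A)) {a : A}
    {c : R} (h : α (Multiplicative.ofAdd 1) a = c • a) (m : ℕ) :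
    α (Multiplicative.ofAdd (m : ZMod n)) a = c ^ m • a := by
  rw [← nsmul_one, ofAdd_nsmul, map_pow]
  exact AlgEquiv.pow_apply_of_apply_eq_smul h m

theorem AlgHom.eq_one_of_apply_eq_smul_of_isUnit {K A : Type*} [Field K] [Ring A] [Algebra K A]
    (χ : A →ₐ[K] K) {f : A ≃ₐ[K] A} {a : A} {c : K} (ha : IsUnit a) (hfa : f a = c • a)
    (hχ : χ (f a) = χ a) : c = 1 := by
  rw [hfa, map_smul, smul_eq_mul] at hχ
  exact (mul_eq_right₀ (ha.map χ).ne_zero).1 hχ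

theorem stmt5_general (n : ℕ) (A : Type*) [Ring A] [Algebra ℂ A]
    (α : Multiplicative (ZMod n) →* (A ≃ₐ[ℂ] A))
    (ha : ∃ a : Aˣ, α (Multiplicative.ofAdd (1 : ZMod n)) (a : A) =
      Complex.exp (2 * Real.pi * Complex.I / n) • (a : A)) :
    ∀ (χ : A →ₐ[ℂ] ℂ) (l : ℕ), l < n →
      (∀ x : A, χ (α (Multiplicative.ofAdd (l : ZMod n)) x) = χ x) → l = 0 := by
  intro χ l hl hfix
  obtain ⟨a, ha⟩ := ha
  have hζ : IsPrimitiveRoot (exp (2 * Real.pi * I / n)) n := isPrimitiveRoot_exp n (by omega)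
  have hζl : exp (2 * Real.pi * I / n) ^ l = 1 :=
    χ.eq_one_of_apply_eq_smul_of_isUnit a.isUnit
      (α.apply_ofAdd_natCast_of_apply_ofAdd_one ha l) (hfix a)
  exact Nat.eq_zero_of_dvd_of_lt ((hζ.pow_eq_one_iff_dvd l).1 hζl) hl

/-- Let `A` be a unital complex algebra with an action
`α : C_n → Aut(A)` such that the isotypic component
`A₁ = {a : α(ζ)·a = ζ·a}` (with `ζ = exp(2πi/n)`) contains an invertible element.
Then the induced action of `C_n` on the spectrum of `A` (the nonzero algebra
homomorphisms `χ : A → ℂ`), given by `χ·ζ^l := χ ∘ α(ζ^l)`, is free: if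
`χ ∘ α(ζ^l) = χ` for some `0 ≤ l < n`, then `l = 0`. -/
theorem stmt5 (n : ℕ) (hn : 0 < n) (A : Type*) [Ring A] [Algebra ℂ A]
    (α : Multiplicative (ZMod n) →* (A ≃ₐ[ℂ] A))
    (ha : ∃ a : Aˣ, α (Multiplicative.ofAdd (1 : ZMod n)) (a : A) =
      Complex.exp (2 * Real.pi * Complex.I / n) • (a : A)) :
    ∀ (χ : A →ₐ[ℂ] ℂ) (l : ℕ), l < n →
      (∀ x : A, χ (α (Multiplicative.ofAdd (l : ZMod n)) x) = χ x) → l = 0 :=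
  stmt5_general n A α ha
end

section
/- Let A be a unital algebra with an action α of a finite abelian group Λ by algebra automorphisms such that for every character φ ∈ Hom(Λ, 𝕋), the isotypic component A_φ = {a ∈ A : ∀λ, α(λ)·a = φ(λ)·a} contains an invertible element. Then the action of Λ on the spectrum Γ_A of A given by χ·λ := χ ∘ α(λ) is free. -/
theorem CommGroup.exists_circle_char_apply_ne_one {G : Type*} [CommGroup G] [Finite G] {g : G}
    (hg : g ≠ 1) : ∃ φ : G →* Circle, φ g ≠ 1 := by
  have : NeZero (Monoid.exponent G) := ⟨Monoid.exponent_ne_zero_of_finite⟩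
  obtain ⟨φ, hφ⟩ := exists_apply_ne_one_of_hasEnoughRootsOfUnity G Circle hg
  exact ⟨(Units.coeHom Circle).comp φ, fun h ↦ hφ (Units.ext h)⟩

theorem AlgHom.eq_one_of_map_smul_unit {K A B : Type*} [Field K] [Ring A] [Algebra K A] [Ring B]
    [Nontrivial B] [Algebra K B] (χ : A →ₐ[K] B) (u : Aˣ) {c : K}
    (h : χ (c • (u : A)) = χ u) : c = 1 := by
  rw [map_smul, Algebra.smul_def, (u.isUnit.map χ).mul_eq_right] at h
  exact (map_eq_one_iff _ (algebraMap K B).injective).mp h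

/-- Let `Λ` be a finite abelian group acting on a unital complex
algebra `A` by algebra automorphisms via `α : Λ → Aut(A)`, such that for every
character `φ : Λ → 𝕋` the isotypic component
`A_φ = {a : ∀ λ, α(λ)·a = φ(λ)·a}` contains an invertible element.  Then the action
of `Λ` on the spectrum of `A` given by `χ·λ := χ ∘ α(λ)` is free. -/
theorem stmt6 (Λ : Type*) [CommGroup Λ] [Fintype Λ]
    (A : Type*) [Ring A] [Algebra ℂ A] (α : Λ →* (A ≃ₐ[ℂ] A))
    (hunits : ∀ φ : Λ →* Circle, ∃ a : Aˣ,
      ∀ lam : Λ, α lam (a : A) = ((φ lam : ℂ)) • (a : A)) :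
    ∀ (χ : A →ₐ[ℂ] ℂ) (lam : Λ), (∀ x : A, χ (α lam x) = χ x) → lam = 1 := by
  intro χ lam hfix
  by_contra hlam
  obtain ⟨φ, hφ⟩ := CommGroup.exists_circle_char_apply_ne_one hlam
  obtain ⟨a, ha⟩ := hunits φ
  exact hφ (Circle.coe_eq_one.mp (χ.eq_one_of_map_smul_unit a (ha lam ▸ hfix a)))
end

section
/- Let n ∈ ℕ and consider the action of C_n × C_n on M_n(ℂ) by (ζ^k, ζ^l)·A = R^l S^k A S^{-k} R^{-l}. Then the group of algebra automorphisms of M_n(ℂ) commuting with this action is isomorphic to C_n × C_n: every such equivariant automorphism φ satisfies φ(R) = λ_R · R and φ(S) = λ_S · S for some λ_R, λ_S ∈ C_n, and this correspondence is a group isomorphism. -/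
/-!
An automorphism `φ` commuting with conjugation by the clock `R` and the shift `S` sends `R` to an
element satisfying the same twisted commutation relations with `R` and `S` as `R` itself, so
`φ(R) R⁻¹` commutes with `R` and `S`; likewise `φ(S) S⁻¹`. Since `R` and `S` generate `M_n(ℂ)`,
whose centre is `ℂ`, this gives `φ(R) = d R` and `φ(S) = e S`, and `R^n = S^n = 1` forces
`d, e` to be powers of `ζ`. Conversely every automorphism scaling `R` and `S` is equivariant,
conjugation by `S⁻¹` and by `R` realise every pair of exponents, and an automorphism is
determined by its values on the generators `R` and `S`.
-/

section InnerAut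

variable (K : Type*) {A : Type*} [Field K] [Ring A] [Algebra K A]

def innerAut (u : Aˣ) : A ≃ₐ[K] A :=
  MulSemiringAction.toAlgEquiv K A (ConjAct.toConjAct u)

variable {K}

@[simp]
lemma innerAut_apply (u : Aˣ) (x : A) : innerAut K u x = u * x * ↑u⁻¹ := rfl

lemma AlgEquiv.map_units_inv_of_map_eq_smul (f : A ≃ₐ[K] A) {u : Aˣ} {c : K} (hc : c ≠ 0)
    (h : f u = c • u) : f ↑u⁻¹ = c⁻¹ • ↑u⁻¹ := by
  refine left_inv_eq_right_inv (a := f u) ?_ ?_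
  · rw [← map_mul, Units.inv_mul, map_one]
  · rw [h, smul_mul_smul_comm, mul_inv_cancel₀ hc, Units.mul_inv, one_smul]

lemma AlgEquiv.pow_apply_of_apply_eq_smul_s14 (f : A ≃ₐ[K] A) {x : A} {c : K} (h : f x = c • x)
    (k : ℕ) : (f ^ k) x = c ^ k • x := by
  induction k with
  | zero => simp
  | succ k ih => rw [pow_succ, AlgEquiv.mul_apply, h, map_smul, ih, smul_smul, pow_succ']

lemma map_innerAut_of_map_eq_smul {φ : A ≃ₐ[K] A} {g : Aˣ} {c : K} (hc : c ≠ 0)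
    (h : φ g = c • g) (x : A) : φ (innerAut K g x) = innerAut K g (φ x) := by
  rw [innerAut_apply, innerAut_apply, map_mul, map_mul, h,
    φ.map_units_inv_of_map_eq_smul hc h, smul_mul_assoc, mul_smul_comm, smul_mul_assoc,
    smul_smul, inv_mul_cancel₀ hc, one_smul]

lemma commute_map_mul_inv_of_innerAut {φ : A ≃ₐ[K] A} {g a : Aˣ} {c : K} (hc : c ≠ 0)
    (hφ : ∀ x, φ (innerAut K g x) = innerAut K g (φ x)) (ha : innerAut K g a = c • a) :
    Commute (g : A) (φ a * ↑a⁻¹) := by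
  have hφa : innerAut K g (φ a) = c • φ a := by rw [← hφ, ha, map_smul]
  have hfix : innerAut K g (φ a * ↑a⁻¹) = φ a * ↑a⁻¹ := by
    rw [map_mul, hφa, (innerAut K g).map_units_inv_of_map_eq_smul hc ha, smul_mul_smul_comm,
      mul_inv_cancel₀ hc, one_smul]
  rwa [innerAut_apply, Units.mul_inv_eq_iff_eq_mul] at hfix

lemma exists_eq_algebraMap_of_commute [Algebra.IsCentral K A] {a b x : A}
    (hgen : Algebra.adjoin K {a, b} = ⊤) (ha : Commute a x) (hb : Commute b x) :
    ∃ c : K, x = algebraMap K A c := by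
  rw [← Algebra.IsCentral.mem_center_iff K, Subalgebra.mem_center_iff]
  intro y
  have hle : Algebra.adjoin K {a, b} ≤ Subalgebra.centralizer K {x} := by
    rw [Algebra.adjoin_le_iff, Set.pair_subset_iff]
    simp only [SetLike.mem_coe, Subalgebra.mem_centralizer_iff, Set.mem_singleton_iff,
      forall_eq]
    exact ⟨ha.symm.eq, hb.symm.eq⟩
  rw [hgen] at hle
  exact ((Subalgebra.mem_centralizer_iff K).1 (hle Algebra.mem_top) x rfl).symm

lemma pow_eq_one_of_map_eq_smul [Nontrivial A] {φ : A ≃ₐ[K] A} {a : A} {d : K} {n : ℕ}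
    (ha : a ^ n = 1) (h : φ a = d • a) : d ^ n = 1 := by
  have := congrArg (· ^ n) h
  simp only [← map_pow, ha, map_one, smul_pow, ← Algebra.algebraMap_eq_smul_one] at this
  exact (algebraMap K A).injective (by rw [← this, map_one])

end InnerAut

section WeylPair

variable {K A : Type*} [Field K] [Ring A] [Algebra K A]

structure IsWeylPair (ζ : K) (n : ℕ) (r s : Aˣ) : Prop where
  isPrimitiveRoot : IsPrimitiveRoot ζ n
  mul_eq_smul_mul : (r : A) * s = ζ • (s * r)
  pow_left : r ^ n = 1
  pow_right : s ^ n = 1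
  adjoin_eq_top : Algebra.adjoin K ({(r : A), (s : A)} : Set A) = ⊤

def IsEquivariant (r s : Aˣ) (φ : A ≃ₐ[K] A) : Prop :=
  ∀ (k l : ℕ) (x : A), φ (innerAut K (r ^ l * s ^ k) x) = innerAut K (r ^ l * s ^ k) (φ x)

-- Junk when `φ a` is not of the form `ζ ^ k • a`.
noncomputable def scalingExponent (n : ℕ) (ζ : K) (a : A) (φ : A ≃ₐ[K] A) : ZMod n :=
  Function.invFun (fun k : ZMod n => ζ ^ k.val • a) (φ a)

-- Junk when `φ a` is not of the form `ζ ^ k • a`.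
noncomputable def scalingExponents (n : ℕ) (ζ : K) (r s : A) (φ : A ≃ₐ[K] A) :
    Multiplicative (ZMod n) × Multiplicative (ZMod n) :=
  (Multiplicative.ofAdd (scalingExponent n ζ r φ),
    Multiplicative.ofAdd (scalingExponent n ζ s φ))

lemma pow_val_natCast {n : ℕ} {ζ : K} (hζ : ζ ^ n = 1) (k : ℕ) :
    ζ ^ (k : ZMod n).val = ζ ^ k := by
  rw [ZMod.val_natCast, ← pow_eq_pow_mod k hζ]

lemma scalingExponent_eq {n : ℕ} [NeZero n] {ζ : K} (hζ : IsPrimitiveRoot ζ n) {a : A}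
    (ha : a ≠ 0) {φ : A ≃ₐ[K] A} {k : ℕ} (h : φ a = ζ ^ k • a) :
    scalingExponent n ζ a φ = k := by
  have hinj : Function.Injective fun k : ZMod n => ζ ^ k.val • a :=
    (smul_left_injective K ha).comp fun x y hxy =>
      ZMod.val_injective n (hζ.pow_inj (ZMod.val_lt x) (ZMod.val_lt y) hxy)
  rw [scalingExponent, h, ← pow_val_natCast hζ.pow_eq_one k]
  exact Function.leftInverse_invFun hinj _

namespace IsWeylPair

variable {ζ : K} {n : ℕ} {r s : Aˣ}

lemma innerAut_left_right (hw : IsWeylPair ζ n r s) : innerAut K r s = ζ • (s : A) := by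
  rw [innerAut_apply, hw.mul_eq_smul_mul, smul_mul_assoc, Units.mul_inv_cancel_right]

lemma innerAut_inv_right_left (hw : IsWeylPair ζ n r s) :
    innerAut K s⁻¹ r = ζ • (r : A) := by
  rw [innerAut_apply, inv_inv, mul_assoc, hw.mul_eq_smul_mul, mul_smul_comm,
    Units.inv_mul_cancel_left]

lemma ext (hw : IsWeylPair ζ n r s) {φ ψ : A ≃ₐ[K] A} (hr : φ r = ψ r) (hs : φ s = ψ s) :
    φ = ψ :=
  AlgEquiv.coe_toAlgHom_injective <| AlgHom.ext_of_adjoin_eq_top hw.adjoin_eq_top <| by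
    rintro _ (rfl | rfl)
    exacts [hr, hs]

lemma exists_map_eq (hw : IsWeylPair ζ n r s) (k l : ℕ) :
    ∃ φ : A ≃ₐ[K] A, φ r = ζ ^ k • (r : A) ∧ φ s = ζ ^ l • (s : A) := by
  have hrr : innerAut K r r = (1 : K) • (r : A) := by simp
  have hss : innerAut K s⁻¹ s = (1 : K) • (s : A) := by simp
  refine ⟨innerAut K s⁻¹ ^ k * innerAut K r ^ l, ?_, ?_⟩
  · rw [AlgEquiv.mul_apply, AlgEquiv.pow_apply_of_apply_eq_smul_s14 _ hrr, one_pow, one_smul,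
      AlgEquiv.pow_apply_of_apply_eq_smul_s14 _ hw.innerAut_inv_right_left]
  · rw [AlgEquiv.mul_apply, AlgEquiv.pow_apply_of_apply_eq_smul_s14 _ hw.innerAut_left_right,
      map_smul, AlgEquiv.pow_apply_of_apply_eq_smul_s14 _ hss, one_pow, one_smul]

variable [Nontrivial A]

lemma ne_zero (hw : IsWeylPair ζ n r s) : ζ ≠ 0 := by
  rintro rfl
  apply (r * s).ne_zero
  rw [Units.val_mul, hw.mul_eq_smul_mul, zero_smul]

lemma innerAut_right_left (hw : IsWeylPair ζ n r s) : innerAut K s r = ζ⁻¹ • (r : A) := by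
  calc innerAut K s r = ζ⁻¹ • ζ • (s * r * ↑s⁻¹ : A) := by
        rw [smul_smul, inv_mul_cancel₀ hw.ne_zero, one_smul, innerAut_apply]
    _ = ζ⁻¹ • (r : A) := by
        rw [← smul_mul_assoc, ← hw.mul_eq_smul_mul, Units.mul_inv_cancel_right]

variable [NeZero n]

lemma scalingExponents_of_map_eq (hw : IsWeylPair ζ n r s) {φ : A ≃ₐ[K] A} {k l : ℕ}
    (hk : φ r = ζ ^ k • (r : A)) (hl : φ s = ζ ^ l • (s : A)) :
    scalingExponents n ζ (r : A) s φ =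
      (Multiplicative.ofAdd (k : ZMod n), Multiplicative.ofAdd (l : ZMod n)) := by
  rw [scalingExponents, scalingExponent_eq hw.isPrimitiveRoot r.ne_zero hk,
    scalingExponent_eq hw.isPrimitiveRoot s.ne_zero hl]

variable [Algebra.IsCentral K A]

lemma exists_map_eq_pow_smul (hw : IsWeylPair ζ n r s) {φ : A ≃ₐ[K] A}
    (hr : ∀ x, φ (innerAut K r x) = innerAut K r (φ x))
    (hs : ∀ x, φ (innerAut K s x) = innerAut K s (φ x)) {a : Aˣ} (ha : a ^ n = 1) {c c' : K}
    (hc : c ≠ 0) (hc' : c' ≠ 0) (har : innerAut K r a = c • a)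
    (has : innerAut K s a = c' • a) :
    ∃ k : ℕ, φ a = ζ ^ k • a := by
  obtain ⟨d, hd⟩ := exists_eq_algebraMap_of_commute hw.adjoin_eq_top
    (commute_map_mul_inv_of_innerAut hc hr har) (commute_map_mul_inv_of_innerAut hc' hs has)
  have hφa : φ a = d • a := by rw [Algebra.smul_def, ← hd, Units.inv_mul_cancel_right]
  have hdn : d ^ n = 1 := pow_eq_one_of_map_eq_smul (by rw [← Units.val_pow_eq_pow_val, ha,
    Units.val_one]) hφa
  obtain ⟨k, -, hk⟩ := hw.isPrimitiveRoot.eq_pow_of_pow_eq_one hdn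
  exact ⟨k, by rw [hφa, hk]⟩

theorem isEquivariant_iff (hw : IsWeylPair ζ n r s) (φ : A ≃ₐ[K] A) :
    IsEquivariant r s φ ↔ ∃ k l : ℕ, φ r = ζ ^ k • (r : A) ∧ φ s = ζ ^ l • (s : A) := by
  constructor
  · intro h
    have hr : ∀ x, φ (innerAut K r x) = innerAut K r (φ x) := by simpa using h 0 1
    have hs : ∀ x, φ (innerAut K s x) = innerAut K s (φ x) := by simpa using h 1 0
    have hself : ∀ u : Aˣ, innerAut K u u = (1 : K) • (u : A) := by simp
    obtain ⟨k, hk⟩ := hw.exists_map_eq_pow_smul hr hs hw.pow_left one_ne_zero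
      (inv_ne_zero hw.ne_zero) (hself r) hw.innerAut_right_left
    obtain ⟨l, hl⟩ := hw.exists_map_eq_pow_smul hr hs hw.pow_right hw.ne_zero one_ne_zero
      hw.innerAut_left_right (hself s)
    exact ⟨k, l, hk, hl⟩
  · rintro ⟨k, l, hk, hl⟩ k' l'
    refine map_innerAut_of_map_eq_smul (c := (ζ ^ k) ^ l' * (ζ ^ l) ^ k')
      (by simp [hw.ne_zero]) ?_
    rw [Units.val_mul, Units.val_pow_eq_pow_val, Units.val_pow_eq_pow_val, map_mul, map_pow,
      map_pow, hk, hl, smul_pow, smul_pow, smul_mul_smul_comm]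

theorem exists_scalingExponents_eq (hw : IsWeylPair ζ n r s) {φ : A ≃ₐ[K] A}
    (hφ : IsEquivariant r s φ) :
    ∃ k l : ℕ, scalingExponents n ζ (r : A) s φ =
        (Multiplicative.ofAdd (k : ZMod n), Multiplicative.ofAdd (l : ZMod n)) ∧
      φ r = ζ ^ k • (r : A) ∧ φ s = ζ ^ l • (s : A) := by
  obtain ⟨k, l, hk, hl⟩ := (hw.isEquivariant_iff φ).1 hφ
  exact ⟨k, l, hw.scalingExponents_of_map_eq hk hl, hk, hl⟩

theorem scalingExponents_mul (hw : IsWeylPair ζ n r s) {φ ψ : A ≃ₐ[K] A}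
    (hφ : IsEquivariant r s φ) (hψ : IsEquivariant r s ψ) :
    scalingExponents n ζ (r : A) s (φ * ψ) =
      scalingExponents n ζ (r : A) s φ * scalingExponents n ζ (r : A) s ψ := by
  obtain ⟨k, l, hφe, hk, hl⟩ := hw.exists_scalingExponents_eq hφ
  obtain ⟨k', l', hψe, hk', hl'⟩ := hw.exists_scalingExponents_eq hψ
  have hr : (φ * ψ) r = ζ ^ (k + k') • (r : A) := by
    rw [AlgEquiv.mul_apply, hk', map_smul, hk, smul_smul, ← pow_add, add_comm k']
  have hs : (φ * ψ) s = ζ ^ (l + l') • (s : A) := by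
    rw [AlgEquiv.mul_apply, hl', map_smul, hl, smul_smul, ← pow_add, add_comm l']
  rw [hw.scalingExponents_of_map_eq hr hs, hφe, hψe]
  simp

theorem eq_of_scalingExponents_eq (hw : IsWeylPair ζ n r s) {φ ψ : A ≃ₐ[K] A}
    (hφ : IsEquivariant r s φ) (hψ : IsEquivariant r s ψ)
    (h : scalingExponents n ζ (r : A) s φ = scalingExponents n ζ (r : A) s ψ) : φ = ψ := by
  obtain ⟨k, l, hφe, hk, hl⟩ := hw.exists_scalingExponents_eq hφ
  obtain ⟨k', l', hψe, hk', hl'⟩ := hw.exists_scalingExponents_eq hψ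
  rw [hφe, hψe, Prod.mk.injEq, EmbeddingLike.apply_eq_iff_eq, EmbeddingLike.apply_eq_iff_eq] at h
  have hζ := hw.isPrimitiveRoot.pow_eq_one
  refine hw.ext ?_ ?_
  · rw [hk, hk', ← pow_val_natCast hζ k, h.1, pow_val_natCast hζ]
  · rw [hl, hl', ← pow_val_natCast hζ l, h.2, pow_val_natCast hζ]

theorem exists_isEquivariant_scalingExponents_eq (hw : IsWeylPair ζ n r s)
    (g : Multiplicative (ZMod n) × Multiplicative (ZMod n)) :
    ∃ φ : A ≃ₐ[K] A, IsEquivariant r s φ ∧ scalingExponents n ζ (r : A) s φ = g := by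
  obtain ⟨φ, hk, hl⟩ := hw.exists_map_eq g.1.toAdd.val g.2.toAdd.val
  refine ⟨φ, (hw.isEquivariant_iff φ).2 ⟨_, _, hk, hl⟩, ?_⟩
  rw [hw.scalingExponents_of_map_eq hk hl, ZMod.natCast_zmod_val, ZMod.natCast_zmod_val]
  rfl

end IsWeylPair

end WeylPair

lemma pow_val_add_one {M : Type*} [Monoid M] {n : ℕ} [NeZero n] {ζ : M} (hζ : ζ ^ n = 1)
    (j : Fin n) :
    ζ ^ ((j + 1 : Fin n) : ℕ) = ζ ^ (j : ℕ) * ζ := by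
  rw [Fin.val_add, Fin.val_one', Nat.add_mod_mod, ← pow_eq_pow_mod _ hζ, pow_succ]

namespace Matrix

variable {K : Type*} [Field K]

lemma single_mem_adjoin_diagonal {ι : Type*} [Fintype ι] [DecidableEq ι] {d : ι → K}
    (hd : Function.Injective d) (j : ι) :
    single j j (1 : K) ∈ Algebra.adjoin K {diagonal d} := by
  set c := ∏ i ∈ Finset.univ.erase j, (d j - d i)
  have hc : c ≠ 0 := Finset.prod_ne_zero_iff.2 fun i hi =>
    sub_ne_zero.2 fun h => (Finset.ne_of_mem_erase hi) (hd h).symm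
  have hprod : ∏ i ∈ Finset.univ.erase j, (d - algebraMap K _ (d i)) = Pi.single j c := by
    ext p
    rw [Finset.prod_apply]
    rcases eq_or_ne p j with rfl | hp
    · simp [c]
    · rw [Pi.single_eq_of_ne hp]
      exact Finset.prod_eq_zero (Finset.mem_erase.2 ⟨hp, Finset.mem_univ p⟩) (by simp)
  have hmem : Pi.single j c ∈ Algebra.adjoin K {d} :=
    hprod ▸ Subalgebra.prod_mem _ fun i _ =>
      sub_mem (Algebra.self_mem_adjoin_singleton K d) (Subalgebra.algebraMap_mem _ _)
  have hdiag : single j j c ∈ Algebra.adjoin K {diagonal d} := by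
    rw [← diagonal_single, ← diagonalAlgHom_apply (R := K), ← AlgHom.map_adjoin_singleton]
    exact Subalgebra.mem_map.2 ⟨_, hmem, rfl⟩
  simpa [smul_single, inv_mul_cancel₀ hc] using Subalgebra.smul_mem _ hdiag c⁻¹

def clock (n : ℕ) (ζ : K) : Matrix (Fin n) (Fin n) K := diagonal fun i => ζ ^ (i : ℕ)

lemma clock_pow_self {n : ℕ} {ζ : K} (hζ : ζ ^ n = 1) : clock n ζ ^ n = 1 := by
  rw [clock, diagonal_pow, ← diagonal_one]
  congr 1
  ext i
  rw [Pi.pow_apply, ← pow_mul, mul_comm, pow_mul, hζ, one_pow]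

variable (K) (n : ℕ) [NeZero n]

def shift : Matrix (Fin n) (Fin n) K := of fun i j => if i = j + 1 then 1 else 0

variable {K n}

lemma shift_mul_single (p q : Fin n) (c : K) : shift K n * single p q c = single (p + 1) q c := by
  ext i j
  rcases eq_or_ne j q with rfl | hj
  · simp [mul_single_apply_same, shift, single_apply, eq_comm]
  · rw [mul_single_apply_of_ne (hbj := hj)]
    simp [hj.symm]

open Fin.NatCast in
lemma shift_pow_mul_single (m : ℕ) (p q : Fin n) (c : K) :
    shift K n ^ m * single p q c = single (p + m) q c := by
  induction m generalizing p with
  | zero => simp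
  | succ m ih =>
    rw [pow_succ, mul_assoc, shift_mul_single, ih, Nat.cast_succ, add_assoc, add_comm 1]

lemma shift_pow_self : shift K n ^ n = 1 := by
  ext i j
  have h := congr_fun₂ (shift_pow_mul_single n j j (1 : K)) i j
  rw [mul_single_apply_same, mul_one, Fin.natCast_self, add_zero] at h
  rw [h, single_apply, one_apply]
  grind

lemma clock_mul_shift {ζ : K} (hζ : ζ ^ n = 1) :
    clock n ζ * shift K n = ζ • (shift K n * clock n ζ) := by
  ext i j
  simp only [clock, shift, diagonal_mul, mul_diagonal, smul_apply, of_apply]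
  split_ifs with h
  · rw [h, pow_val_add_one hζ]; simp [mul_comm]
  · simp

open Fin.NatCast in
lemma adjoin_clock_shift_eq_top {ζ : K} (hζ : IsPrimitiveRoot ζ n) :
    Algebra.adjoin K {clock n ζ, shift K n} = ⊤ := by
  set T := Algebra.adjoin K {clock n ζ, shift K n}
  have hdiag (j : Fin n) : single j j (1 : K) ∈ T :=
    Algebra.adjoin_mono (Set.singleton_subset_iff.2 (Set.mem_insert _ _))
      (single_mem_adjoin_diagonal (fun i j h => Fin.ext (hζ.pow_inj i.2 j.2 h)) j)
  have hshift : shift K n ∈ T := Algebra.subset_adjoin (Set.mem_insert_of_mem _ rfl)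
  have hsingle (i j : Fin n) : single i j (1 : K) ∈ T := by
    have h := shift_pow_mul_single (K := K) ((i - j : Fin n) : ℕ) j j 1
    rw [Fin.cast_val_eq_self, add_sub_cancel] at h
    exact h ▸ mul_mem (pow_mem hshift _) (hdiag j)
  refine eq_top_iff.2 fun x _ => ?_
  rw [matrix_eq_sum_single x]
  exact Subalgebra.sum_mem _ fun i _ => Subalgebra.sum_mem _ fun j _ => by
    simpa [smul_single] using Subalgebra.smul_mem _ (hsingle i j) (x i j)

theorem exists_isWeylPair_clock_shift {ζ : K} (hζ : IsPrimitiveRoot ζ n) :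
    ∃ r s : (Matrix (Fin n) (Fin n) K)ˣ,
      (r : Matrix (Fin n) (Fin n) K) = clock n ζ ∧ (s : Matrix (Fin n) (Fin n) K) = shift K n ∧
        IsWeylPair ζ n r s :=
  ⟨Units.ofPowEqOne _ n (clock_pow_self hζ.pow_eq_one) (NeZero.ne n),
    Units.ofPowEqOne _ n shift_pow_self (NeZero.ne n), rfl, rfl,
    { isPrimitiveRoot := hζ
      mul_eq_smul_mul := clock_mul_shift hζ.pow_eq_one
      pow_left := Units.pow_ofPowEqOne _ _
      pow_right := Units.pow_ofPowEqOne _ _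
      adjoin_eq_top := adjoin_clock_shift_eq_top hζ }⟩

lemma innerAut_mul_apply {m : Type*} [Fintype m] [DecidableEq m] (u v : (Matrix m m K)ˣ)
    (x : Matrix m m K) :
    innerAut K (u * v) x = u * v * x * (v : Matrix m m K)⁻¹ * (u : Matrix m m K)⁻¹ := by
  simp [mul_assoc, coe_units_inv]

end Matrix

/-- Consider the action of `C_n × C_n` on `M_n(ℂ)` by
`(ζ^k, ζ^l)·A = R^l S^k A S^{-k} R^{-l}`.  Every algebra automorphism `φ` of
`M_n(ℂ)` commuting with this action satisfies `φ(R) = ζ^k • R` and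
`φ(S) = ζ^l • S` for some `k, l`, and this correspondence
`φ ↦ (ζ^k, ζ^l)` is a group isomorphism between the group of equivariant
automorphisms and `C_n × C_n`. -/
theorem stmt14 (n : ℕ) (hn : 0 < n)
    (ζ : ℂ) (hζ : ζ = Complex.exp (2 * Real.pi * Complex.I / n))
    (R S : Matrix (Fin n) (Fin n) ℂ)
    (hR : R = Matrix.diagonal fun i : Fin n => ζ ^ (i : ℕ))
    (hS : ∀ i j : Fin n, S i j = if (i : ℕ) = ((j : ℕ) + 1) % n then (1 : ℂ) else 0)
    (Equivariant : (Matrix (Fin n) (Fin n) ℂ ≃ₐ[ℂ] Matrix (Fin n) (Fin n) ℂ) → Prop)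
    (hEquivariant : ∀ φ, Equivariant φ ↔
      ∀ (k l : ℕ) (A : Matrix (Fin n) (Fin n) ℂ),
        φ (R ^ l * S ^ k * A * (S ^ k)⁻¹ * (R ^ l)⁻¹) =
          R ^ l * S ^ k * φ A * (S ^ k)⁻¹ * (R ^ l)⁻¹) :
    ∃ Φ : (Matrix (Fin n) (Fin n) ℂ ≃ₐ[ℂ] Matrix (Fin n) (Fin n) ℂ) →
        Multiplicative (ZMod n) × Multiplicative (ZMod n),
      (∀ φ ψ, Equivariant φ → Equivariant ψ → Φ (φ * ψ) = Φ φ * Φ ψ) ∧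
      (∀ φ ψ, Equivariant φ → Equivariant ψ → Φ φ = Φ ψ → φ = ψ) ∧
      (∀ g, ∃ φ, Equivariant φ ∧ Φ φ = g) ∧
      (∀ φ, Equivariant φ → ∃ k l : ℕ,
        Φ φ = (Multiplicative.ofAdd (k : ZMod n), Multiplicative.ofAdd (l : ZMod n)) ∧
        φ R = ζ ^ k • R ∧ φ S = ζ ^ l • S) := by
  have : NeZero n := ⟨hn.ne'⟩
  obtain ⟨r, s, hr, hs, hw⟩ :=
    Matrix.exists_isWeylPair_clock_shift (hζ ▸ Complex.isPrimitiveRoot_exp n hn.ne')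
  obtain rfl : R = r := hR.trans hr.symm
  obtain rfl : S = s := by
    ext i j
    simp only [hS, hs, Matrix.shift, Matrix.of_apply, Fin.ext_iff, Fin.val_add, Fin.val_one',
      Nat.add_mod_mod]
  have hequiv (φ) : Equivariant φ ↔ IsEquivariant r s φ := by
    simp only [hEquivariant, IsEquivariant, Matrix.innerAut_mul_apply, Units.val_pow_eq_pow_val]
  simp only [hequiv]
  exact ⟨scalingExponents n ζ r s, fun _ _ => hw.scalingExponents_mul,
    fun _ _ => hw.eq_of_scalingExponents_eq, hw.exists_isEquivariant_scalingExponents_eq,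
    fun _ => hw.exists_scalingExponents_eq⟩
end

section
/- Let G be a group, B a unital algebra, and (S, ω) a factor system for (G, B), i.e., S : G → Aut(B) and ω : G × G → B^× are normalized maps satisfying S(g)S(g') = C_B(ω(g,g')) ∘ S(gg') and the cocycle condition S(g)(ω(g',g'')) ω(g, g'g'') = ω(g,g') ω(gg', g''). Then the vector space A = ⊕_{g∈G} B v_g with multiplication (b v_g)(b' v_{g'}) := b·S(g)(b')·ω(g,g') v_{gg'} is an associative unital G-graded algebra with unit v_1 and degree-1 component B, and every homogeneous element b v_g with b ∈ B^× is invertible, with inverse S(g)^{-1}(b^{-1} ω(g, g^{-1})^{-1}) v_{g^{-1}}. -/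
/-- The crossed-product multiplication on `A = ⊕_{g ∈ G} B v_g` (modelled as
finitely supported functions `G →₀ B`) associated to maps `S : G → Aut(B)` and
`ω : G × G → Bˣ`: on homogeneous elements,
`(b v_g)(b' v_{g'}) = b · S(g)(b') · ω(g,g') v_{gg'}`. -/
noncomputable def cpMul {G : Type*} [Group G] {B : Type*} [Ring B]
    (S : G → (B ≃+* B)) (ω : G → G → Bˣ) :
    (G →₀ B) → (G →₀ B) → (G →₀ B) := fun f₁ f₂ =>
  f₁.sum fun g b => f₂.sum fun g' b' =>
    Finsupp.single (g * g') (b * S g b' * (ω g g' : B))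

/-!
Since the multiplication is biadditive, associativity and the unit laws reduce to
homogeneous elements `b v_g`. There associativity compares
`b S(g)(b') S(g)(S(g')(b'')) S(g)(ω(g',g'')) ω(g,g'g'')` with
`b S(g)(b') ω(g,g') S(gg')(b'') ω(gg',g'')`: rewriting `S(g) ∘ S(g')` as conjugation of
`S(gg')` by `ω(g,g')` turns the first into the second up to the cocycle identity.
For the inverse, the cocycle identity at `(g, g⁻¹, g)` gives `S(g)(ω(g⁻¹,g)) = ω(g,g⁻¹)`,
which is what makes the proposed right inverse a left inverse as well.
-/

namespace CrossedProduct

open Finsupp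

variable {G : Type*} [Group G] {B : Type*} [Ring B] (S : G → (B ≃+* B)) (ω : G → G → Bˣ)

@[simp]
theorem cpMul_single_single (g g' : G) (b b' : B) :
    cpMul S ω (single g b) (single g' b') = single (g * g') (b * S g b' * (ω g g' : B)) := by
  unfold cpMul
  rw [sum_single_index (by simp), sum_single_index (by simp)]

@[simp]
theorem cpMul_zero_left (f : G →₀ B) : cpMul S ω 0 f = 0 := by
  simp [cpMul]

@[simp]
theorem cpMul_zero_right (f : G →₀ B) : cpMul S ω f 0 = 0 := by
  simp [cpMul]

theorem cpMul_add_left (f₁ f₂ h : G →₀ B) :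
    cpMul S ω (f₁ + f₂) h = cpMul S ω f₁ h + cpMul S ω f₂ h := by
  classical
  unfold cpMul
  rw [sum_add_index (by simp)]
  intro g _ b₁ b₂
  rw [← sum_add]
  congr 1; ext g' b'
  rw [add_mul, add_mul, single_add]

theorem cpMul_add_right (f h₁ h₂ : G →₀ B) :
    cpMul S ω f (h₁ + h₂) = cpMul S ω f h₁ + cpMul S ω f h₂ := by
  classical
  unfold cpMul
  rw [← sum_add]
  congr 1; ext g b
  rw [sum_add_index (by simp)]
  intro g' _ b₁ b₂
  rw [map_add, mul_add, add_mul, single_add]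

theorem cpMul_assoc_of_single
    (h : ∀ (g g' g'' : G) (b b' b'' : B),
      cpMul S ω (cpMul S ω (single g b) (single g' b')) (single g'' b'') =
        cpMul S ω (single g b) (cpMul S ω (single g' b') (single g'' b'')))
    (x y z : G →₀ B) : cpMul S ω (cpMul S ω x y) z = cpMul S ω x (cpMul S ω y z) := by
  induction x using induction_linear with
  | zero => simp only [cpMul_zero_left]
  | add x x' hx hx' => simp only [cpMul_add_left, hx, hx']
  | single g b =>
    induction y using induction_linear with
    | zero => simp only [cpMul_zero_left, cpMul_zero_right]
    | add y y' hy hy' => simp only [cpMul_add_left, cpMul_add_right, hy, hy']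
    | single g' b' =>
      induction z using induction_linear with
      | zero => simp only [cpMul_zero_right]
      | add z z' hz hz' => simp only [cpMul_add_right, hz, hz']
      | single g'' b'' => exact h g g' g'' b b' b''

theorem cpMul_single_assoc
    (hδ : ∀ g g' b, S g (S g' b) = (ω g g' : B) * S (g * g') b * ((ω g g')⁻¹ : Bˣ))
    (hcoc : ∀ g g' g'',
      (S g (ω g' g'') : B) * (ω g (g' * g'') : B) = (ω g g' : B) * (ω (g * g') g'' : B))
    (g g' g'' : G) (b b' b'' : B) :
    cpMul S ω (cpMul S ω (single g b) (single g' b')) (single g'' b'') =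
      cpMul S ω (single g b) (cpMul S ω (single g' b') (single g'' b'')) := by
  have hcoc' : ((ω g g')⁻¹ : Bˣ) * ((S g (ω g' g'') : B) * (ω g (g' * g'') : B)) =
      (ω (g * g') g'' : B) := by
    rw [hcoc, ← mul_assoc, Units.inv_mul, one_mul]
  simp only [cpMul_single_single, map_mul, hδ g g' b'', mul_assoc, hcoc']

theorem cpMul_single_one_left (hS1 : S 1 = RingEquiv.refl B) (hω1' : ∀ g, ω 1 g = 1)
    (x : G →₀ B) : cpMul S ω (single 1 1) x = x := by
  induction x using induction_linear with
  | zero => exact cpMul_zero_right S ω _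
  | add x x' hx hx' => rw [cpMul_add_right, hx, hx']
  | single g b => simp [hS1, hω1']

theorem cpMul_single_one_right (hω1 : ∀ g, ω g 1 = 1) (x : G →₀ B) :
    cpMul S ω x (single 1 1) = x := by
  induction x using induction_linear with
  | zero => exact cpMul_zero_left S ω _
  | add x x' hx hx' => rw [cpMul_add_left, hx, hx']
  | single g b => simp [hω1]

theorem cpMul_single_single_inv (g : G) (b : Bˣ) :
    cpMul S ω (single g (b : B))
        (single g⁻¹ ((S g).symm (((b⁻¹ : Bˣ) : B) * ((ω g g⁻¹)⁻¹ : Bˣ)))) = single 1 1 := by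
  rw [cpMul_single_single, mul_inv_cancel, RingEquiv.apply_symm_apply]
  simp only [mul_assoc, Units.inv_mul, mul_one, Units.mul_inv]

theorem apply_ω_inv_self (hω1 : ∀ g, ω g 1 = 1) (hω1' : ∀ g, ω 1 g = 1)
    (hcoc : ∀ g g' g'',
      (S g (ω g' g'') : B) * (ω g (g' * g'') : B) = (ω g g' : B) * (ω (g * g') g'' : B))
    (g : G) : S g (ω g⁻¹ g : B) = (ω g g⁻¹ : B) := by
  simpa [hω1, hω1'] using hcoc g g⁻¹ g

theorem cpMul_single_inv_single (hS1 : S 1 = RingEquiv.refl B)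
    (hω1 : ∀ g, ω g 1 = 1) (hω1' : ∀ g, ω 1 g = 1)
    (hδ : ∀ g g' b, S g (S g' b) = (ω g g' : B) * S (g * g') b * ((ω g g')⁻¹ : Bˣ))
    (hcoc : ∀ g g' g'',
      (S g (ω g' g'') : B) * (ω g (g' * g'') : B) = (ω g g' : B) * (ω (g * g') g'' : B))
    (g : G) (b : Bˣ) :
    cpMul S ω (single g⁻¹ ((S g).symm (((b⁻¹ : Bˣ) : B) * ((ω g g⁻¹)⁻¹ : Bˣ))))
      (single g (b : B)) = single 1 1 := by
  rw [cpMul_single_single, inv_mul_cancel]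
  congr 1
  apply (S g).injective
  rw [map_one, map_mul, map_mul, RingEquiv.apply_symm_apply, hδ, mul_inv_cancel, hS1,
    RingEquiv.refl_apply, apply_ω_inv_self S ω hω1 hω1' hcoc]
  simp only [mul_assoc, Units.inv_mul, Units.inv_mul_cancel_left]

end CrossedProduct

open CrossedProduct in
/-- Let `(S, ω)` be a factor system for `(G, B)`:  `S` and `ω` are
normalized, `S(g)S(g') = C_B(ω(g,g')) ∘ S(gg')` and
`S(g)(ω(g',g'')) ω(g,g'g'') = ω(g,g') ω(gg',g'')`.  Then `A = ⊕_g B v_g` with the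
crossed-product multiplication is an associative unital `G`-graded algebra with unit
`v_1` and degree-one component `B`, and each homogeneous element `b v_g` with
`b ∈ Bˣ` is invertible, with inverse `S(g)⁻¹(b⁻¹ ω(g,g⁻¹)⁻¹) v_{g⁻¹}`. -/
theorem stmt15 (G : Type*) [Group G] (B : Type*) [Ring B]
    (S : G → (B ≃+* B)) (ω : G → G → Bˣ)
    (hS1 : S 1 = RingEquiv.refl B)
    (hω1 : ∀ g, ω g 1 = 1) (hω1' : ∀ g, ω 1 g = 1)
    (hδ : ∀ g g' b, S g (S g' b) = (ω g g' : B) * S (g * g') b * ((ω g g')⁻¹ : Bˣ))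
    (hcoc : ∀ g g' g'',
      (S g (ω g' g'') : B) * (ω g (g' * g'') : B) = (ω g g' : B) * (ω (g * g') g'' : B)) :
    -- associativity
    (∀ x y z : G →₀ B, cpMul S ω (cpMul S ω x y) z = cpMul S ω x (cpMul S ω y z)) ∧
    -- `v_1` is a two-sided unit
    (∀ x : G →₀ B, cpMul S ω (Finsupp.single 1 1) x = x ∧
      cpMul S ω x (Finsupp.single 1 1) = x) ∧
    -- the multiplication is `G`-graded, with the prescribed formula on homogeneous
    -- elements (in particular the degree-one component is `B`)
    (∀ (g g' : G) (b b' : B),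
      cpMul S ω (Finsupp.single g b) (Finsupp.single g' b') =
        Finsupp.single (g * g') (b * S g b' * (ω g g' : B))) ∧
    -- every homogeneous element `b v_g` with `b` a unit is invertible, with the
    -- stated inverse
    (∀ (g : G) (b : Bˣ),
      cpMul S ω (Finsupp.single g (b : B))
          (Finsupp.single g⁻¹ ((S g).symm (((b⁻¹ : Bˣ) : B) * ((ω g g⁻¹)⁻¹ : Bˣ)))) =
        Finsupp.single 1 1 ∧
      cpMul S ω (Finsupp.single g⁻¹ ((S g).symm (((b⁻¹ : Bˣ) : B) * ((ω g g⁻¹)⁻¹ : Bˣ))))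
          (Finsupp.single g (b : B)) = Finsupp.single 1 1) :=
  ⟨cpMul_assoc_of_single S ω (cpMul_single_assoc S ω hδ hcoc),
    fun x => ⟨cpMul_single_one_left S ω hS1 hω1' x, cpMul_single_one_right S ω hω1 x⟩,
    cpMul_single_single S ω,
    fun g b => ⟨cpMul_single_single_inv S ω g b,
      cpMul_single_inv_single S ω hS1 hω1 hω1' hδ hcoc g b⟩⟩
end

section
/- Let G be a group, B a unital algebra, and let (S, ω) and (S', ω') be factor systems for (G, B) related by an element h ∈ C¹(G, B^×): S'(g) = C_B(h(g)) ∘ S(g) and ω'(g,g') = h(g)·S(g)(h(g'))·ω(g,g')·h(gg')^{-1}. Then the map φ : A_{(S',ω')} → A_{(S,ω)} given on homogeneous elements by φ(b v_g) := b·h(g) v_g is an isomorphism of G-graded unital algebras that is the identity on the degree-1 component B. -/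
section CrossedProduct

variable {G : Type*} [Group G] {B : Type*} [Ring B] (S : G → (B ≃+* B)) (ω : G → G → Bˣ)

lemma cpMul_single_single (g g' : G) (b b' : B) :
    cpMul S ω (Finsupp.single g b) (Finsupp.single g' b') =
      Finsupp.single (g * g') (b * S g b' * (ω g g' : B)) := by
  simp [cpMul]

lemma cpMul_zero_left (y : G →₀ B) : cpMul S ω 0 y = 0 := by
  simp [cpMul]

lemma cpMul_zero_right (x : G →₀ B) : cpMul S ω x 0 = 0 := by
  simp [cpMul]

lemma cpMul_add_left (x x' y : G →₀ B) :
    cpMul S ω (x + x') y = cpMul S ω x y + cpMul S ω x' y := by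
  unfold cpMul
  apply Finsupp.sum_add_index' <;> intros <;>
    simp [add_mul, Finsupp.single_add, Finsupp.sum_add]

lemma cpMul_add_right (x y y' : G →₀ B) :
    cpMul S ω x (y + y') = cpMul S ω x y + cpMul S ω x y' := by
  unfold cpMul
  rw [← Finsupp.sum_add]
  refine Finsupp.sum_congr fun g _ => ?_
  apply Finsupp.sum_add_index' <;> intros <;>
    simp [mul_add, add_mul, Finsupp.single_add]

end CrossedProduct

section Twist

variable {G : Type*} {B : Type*} [Semiring B]

noncomputable def twistHom (h : G → Bˣ) : (G →₀ B) →+ (G →₀ B) :=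
  Finsupp.liftAddHom fun g => (Finsupp.singleAddHom g).comp (AddMonoidHom.mulRight (h g : B))

lemma twistHom_single (h : G → Bˣ) (g : G) (b : B) :
    twistHom h (Finsupp.single g b) = Finsupp.single g (b * h g) :=
  Finsupp.liftAddHom_apply_single _ g b

noncomputable def twist (h : G → Bˣ) : (G →₀ B) ≃+ (G →₀ B) :=
  (twistHom h).toAddEquiv (twistHom fun g => (h g)⁻¹)
    (Finsupp.addHom_ext fun g b => by
      simp only [AddMonoidHom.comp_apply, twistHom_single, mul_assoc, Units.mul_inv, mul_one,
        AddMonoidHom.id_apply])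
    (Finsupp.addHom_ext fun g b => by
      simp only [AddMonoidHom.comp_apply, twistHom_single, mul_assoc, Units.inv_mul, mul_one,
        AddMonoidHom.id_apply])

lemma twist_apply (h : G → Bˣ) (f : G →₀ B) :
    twist h f = f.sum fun g b => Finsupp.single g (b * h g) :=
  Finsupp.liftAddHom_apply _ f

lemma twist_single (h : G → Bˣ) (g : G) (b : B) :
    twist h (Finsupp.single g b) = Finsupp.single g (b * h g) :=
  twistHom_single h g b

end Twist

section CohomologousFactorSystems

variable {G : Type*} [Group G] {B : Type*} [Ring B] {S S' : G → (B ≃+* B)}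
  {ω ω' : G → G → Bˣ} {h : G → Bˣ}

lemma twist_cpMul_single_coeff
    (hrelS : ∀ g x, S' g x = (h g : B) * S g x * ((h g)⁻¹ : Bˣ))
    (hrelω : ∀ g g', (ω' g g' : B) =
      (h g : B) * S g (h g') * (ω g g' : B) * ((h (g * g'))⁻¹ : Bˣ))
    (g g' : G) (b b' : B) :
    b * S' g b' * ω' g g' * h (g * g') = b * h g * S g (b' * h g') * ω g g' := by
  rw [hrelS, hrelω, map_mul]
  simp only [mul_assoc, Units.inv_mul_cancel_left, Units.inv_mul, mul_one]

lemma twist_cpMul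
    (hrelS : ∀ g x, S' g x = (h g : B) * S g x * ((h g)⁻¹ : Bˣ))
    (hrelω : ∀ g g', (ω' g g' : B) =
      (h g : B) * S g (h g') * (ω g g' : B) * ((h (g * g'))⁻¹ : Bˣ))
    (x y : G →₀ B) :
    twist h (cpMul S' ω' x y) = cpMul S ω (twist h x) (twist h y) := by
  induction x using Finsupp.induction_linear with
  | zero => simp [cpMul_zero_left]
  | add x x' hx hx' => simp only [cpMul_add_left, map_add, hx, hx']
  | single g b =>
    induction y using Finsupp.induction_linear with
    | zero => simp [cpMul_zero_right]
    | add y y' hy hy' => simp only [cpMul_add_right, map_add, hy, hy']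
    | single g' b' =>
      simp only [cpMul_single_single, twist_single,
        twist_cpMul_single_coeff hrelS hrelω]

end CohomologousFactorSystems

theorem stmt16_general (G : Type*) [Group G] (B : Type*) [Ring B]
    (S S' : G → (B ≃+* B)) (ω ω' : G → G → Bˣ)
    (h : G → Bˣ) (hh1 : h 1 = 1)
    (hrelS : ∀ g x, S' g x = (h g : B) * S g x * ((h g)⁻¹ : Bˣ))
    (hrelω : ∀ g g', (ω' g g' : B) =
      (h g : B) * S g (h g') * (ω g g' : B) * ((h (g * g'))⁻¹ : Bˣ))
    (φ : (G →₀ B) → (G →₀ B))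
    (hφ : ∀ f : G →₀ B, φ f = f.sum fun g b => Finsupp.single g (b * (h g : B))) :
    Function.Bijective φ ∧
    (∀ x y : G →₀ B, φ (x + y) = φ x + φ y) ∧
    (∀ x y : G →₀ B, φ (cpMul S' ω' x y) = cpMul S ω (φ x) (φ y)) ∧
    (∀ (g : G) (b : B), φ (Finsupp.single g b) = Finsupp.single g (b * (h g : B))) ∧
    (∀ b : B, φ (Finsupp.single 1 b) = Finsupp.single 1 b) := by
  obtain rfl : φ = twist h := funext fun f => (hφ f).trans (twist_apply h f).symm
  refine ⟨(twist h).bijective, map_add _, twist_cpMul hrelS hrelω, twist_single h,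
    fun b => ?_⟩
  rw [twist_single, hh1, Units.val_one, mul_one]

/-- Let `(S, ω)` and `(S', ω')` be factor systems for `(G, B)`
related by `h ∈ C¹(G, Bˣ)`: `S'(g) = C_B(h(g)) ∘ S(g)` and
`ω'(g,g') = h(g)·S(g)(h(g'))·ω(g,g')·h(gg')⁻¹`.  Then the map
`φ : A_{(S',ω')} → A_{(S,ω)}`, `b v_g ↦ b·h(g) v_g`, is an isomorphism of `G`-graded
unital algebras which is the identity on the degree-one component `B`. -/
theorem stmt16 (G : Type*) [Group G] (B : Type*) [Ring B]
    (S S' : G → (B ≃+* B)) (ω ω' : G → G → Bˣ)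
    (hS1 : S 1 = RingEquiv.refl B) (hS'1 : S' 1 = RingEquiv.refl B)
    (hω1 : ∀ g, ω g 1 = 1) (hω1' : ∀ g, ω 1 g = 1)
    (hω'1 : ∀ g, ω' g 1 = 1) (hω'1' : ∀ g, ω' 1 g = 1)
    (hδ : ∀ g g' b, S g (S g' b) = (ω g g' : B) * S (g * g') b * ((ω g g')⁻¹ : Bˣ))
    (hδ' : ∀ g g' b,
      S' g (S' g' b) = (ω' g g' : B) * S' (g * g') b * ((ω' g g')⁻¹ : Bˣ))
    (hcoc : ∀ g g' g'',
      (S g (ω g' g'') : B) * (ω g (g' * g'') : B) = (ω g g' : B) * (ω (g * g') g'' : B))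
    (hcoc' : ∀ g g' g'',
      (S' g (ω' g' g'') : B) * (ω' g (g' * g'') : B) =
        (ω' g g' : B) * (ω' (g * g') g'' : B))
    (h : G → Bˣ) (hh1 : h 1 = 1)
    (hrelS : ∀ g x, S' g x = (h g : B) * S g x * ((h g)⁻¹ : Bˣ))
    (hrelω : ∀ g g', (ω' g g' : B) =
      (h g : B) * S g (h g') * (ω g g' : B) * ((h (g * g'))⁻¹ : Bˣ))
    (φ : (G →₀ B) → (G →₀ B))
    (hφ : ∀ f : G →₀ B, φ f = f.sum fun g b => Finsupp.single g (b * (h g : B))) :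
    Function.Bijective φ ∧
    (∀ x y : G →₀ B, φ (x + y) = φ x + φ y) ∧
    (∀ x y : G →₀ B, φ (cpMul S' ω' x y) = cpMul S ω (φ x) (φ y)) ∧
    (∀ (g : G) (b : B), φ (Finsupp.single g b) = Finsupp.single g (b * (h g : B))) ∧
    (∀ b : B, φ (Finsupp.single 1 b) = Finsupp.single 1 b) :=
  stmt16_general G B S S' ω ω' h hh1 hrelS hrelω φ hφ
end

section
/- Let G be a group, B a unital algebra, and A a (G,B)-crossed product algebra. Then A is equivalent (isomorphic via a grading-preserving algebra isomorphism fixing B pointwise) to a crossed product algebra A_{(S,ω)} for some factor system (S,ω): choosing a normalized section σ : G → A_h^× of the degree map, the map a_g ↦ (a_g σ(g)^{-1}) v_g is such an equivalence, where S(g) = C_B(σ(g)) and ω(g,g') = σ(g)σ(g')σ(gg')^{-1}. -/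
/-- Let `A` be a `(G,B)`-crossed product algebra: a `G`-graded
unital algebra `A = ⊕_g ℬ g` (with decomposition map `D`) whose degree-one component
is `B := ℬ 1` and in which every component contains a unit.  Choosing a normalized
section `σ : G → A_hˣ` of the degree map, the map `a_g ↦ (a_g σ(g)⁻¹) v_g` is an
equivalence of `(G,B)`-crossed product algebras from `A` onto the crossed product
algebra `A_{(S,ω)}` (modelled on `G →₀ A` with `B`-valued coefficients), where
`S(g) = C_B(σ(g))` and `ω(g,g') = σ(g)σ(g')σ(gg')⁻¹`: it is bijective onto the
`B`-valued finitely supported functions, additive, multiplicative for the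
crossed-product multiplication, identity on `B`, and grading-preserving. -/
theorem stmt17 (G : Type*) [Group G] (A : Type*) [Ring A] [Algebra ℂ A]
    (ℬ : G → Submodule ℂ A)
    (hone : (1 : A) ∈ ℬ 1)
    (hmul : ∀ (g g' : G) (x y : A), x ∈ ℬ g → y ∈ ℬ g' → x * y ∈ ℬ (g * g'))
    (D : A → (G →₀ A))
    (hDsum : ∀ a : A, (D a).sum (fun _ x => x) = a)
    (hDmem : ∀ (a : A) (g : G), D a g ∈ ℬ g)
    (hDhom : ∀ (g : G) (a : A), a ∈ ℬ g → D a = Finsupp.single g a)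
    (hDadd : ∀ a b : A, D (a + b) = D a + D b)
    (σ : G → Aˣ) (hσ1 : σ 1 = 1) (hσ : ∀ g, ((σ g : Aˣ) : A) ∈ ℬ g)
    (Φ : A → (G →₀ A))
    (hΦ : ∀ a, Φ a = (D a).sum fun g x => Finsupp.single g (x * (((σ g)⁻¹ : Aˣ) : A)))
    (cp : (G →₀ A) → (G →₀ A) → (G →₀ A))
    (hcp : ∀ f₁ f₂ : G →₀ A, cp f₁ f₂ = f₁.sum fun g x => f₂.sum fun g' y =>
      Finsupp.single (g * g')
        (x * ((σ g : A) * y * (((σ g)⁻¹ : Aˣ) : A)) *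
          ((σ g : A) * (σ g' : A) * (((σ (g * g'))⁻¹ : Aˣ) : A)))) :
    (∀ (a : A) (g : G), Φ a g ∈ ℬ 1) ∧
    (∀ a b : A, Φ (a + b) = Φ a + Φ b) ∧
    (∀ a b : A, Φ (a * b) = cp (Φ a) (Φ b)) ∧
    Function.Injective Φ ∧
    (∀ f : G →₀ A, (∀ g, f g ∈ ℬ 1) → ∃ a : A, Φ a = f) ∧
    (∀ b : A, b ∈ ℬ 1 → Φ b = Finsupp.single 1 b) ∧
    (∀ (g : G) (a : A), a ∈ ℬ g → Φ a = Finsupp.single g (a * (((σ g)⁻¹ : Aˣ) : A))) := by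
  classical
  -- Φ is additive
  have hΦadd : ∀ a b : A, Φ (a + b) = Φ a + Φ b := by
    intro a b
    rw [hΦ, hΦ, hΦ, hDadd]
    apply Finsupp.sum_add_index'
    · intro g; simp
    · intro g x y; rw [add_mul, Finsupp.single_add]
  set Φ' : A →+ (G →₀ A) := AddMonoidHom.mk' Φ hΦadd with hΦ'def
  have hΦ'c : ∀ a, Φ' a = Φ a := fun _ => rfl
  set D' : A →+ (G →₀ A) := AddMonoidHom.mk' D hDadd with hD'def
  have hD'c : ∀ a, D' a = D a := fun _ => rfl
  -- Φ on homogeneous elements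
  have hΦhom : ∀ (g : G) (a : A), a ∈ ℬ g →
      Φ a = Finsupp.single g (a * (((σ g)⁻¹ : Aˣ) : A)) := by
    intro g a ha
    rw [hΦ, hDhom g a ha, Finsupp.sum_single_index]
    simp
  -- σ g ⁻¹ is homogeneous of degree g⁻¹
  have hσinv : ∀ g : G, (((σ g)⁻¹ : Aˣ) : A) ∈ ℬ g⁻¹ := by
    intro g
    set v : A := (((σ g)⁻¹ : Aˣ) : A) with hvdef
    have h1 : (1 : A) = (D v).sum fun _ x => x * (σ g : A) := by
      have hv1 : v * (σ g : A) = 1 := Units.inv_mul _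
      rw [← hv1]
      conv_lhs => rw [← hDsum v]
      rw [Finsupp.sum_mul]
    have h2 : Finsupp.single (1 : G) (1 : A)
        = (D v).sum fun h x => Finsupp.single (h * g) (x * (σ g : A)) := by
      calc Finsupp.single (1 : G) (1 : A) = D 1 := (hDhom 1 1 hone).symm
        _ = D' ((D v).sum fun _ x => x * (σ g : A)) := by rw [hD'c, ← h1]
        _ = (D v).sum fun h x => D' (x * (σ g : A)) := map_finsuppSum D' _ _
        _ = (D v).sum fun h x => Finsupp.single (h * g) (x * (σ g : A)) := by
            apply Finsupp.sum_congr
            intro h hh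
            rw [hD'c]
            exact hDhom _ _ (hmul _ _ _ _ (hDmem v h) (hσ g))
    have h3 := congrArg (fun f : G →₀ A => f 1) h2
    simp only [Finsupp.single_eq_same, Finsupp.sum_apply] at h3
    rw [Finsupp.sum] at h3
    have h4 : ∀ h ∈ (D v).support,
        (Finsupp.single (h * g) (D v h * (σ g : A))) 1
          = if h = g⁻¹ then D v g⁻¹ * (σ g : A) else 0 := by
      intro h _
      rw [Finsupp.single_apply]
      by_cases hh : h = g⁻¹
      · subst hh; simp
      · have : h * g ≠ 1 := by
          intro hc; exact hh (eq_inv_of_mul_eq_one_left hc)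
        simp [this, hh]
    rw [Finset.sum_congr rfl h4, Finset.sum_ite_eq' (D v).support g⁻¹] at h3
    have h5 : D v g⁻¹ * (σ g : A) = 1 := by
      by_cases hm : g⁻¹ ∈ (D v).support
      · rw [if_pos hm] at h3; exact h3.symm
      · rw [if_neg hm] at h3
        rw [Finsupp.notMem_support_iff.mp hm, zero_mul]
        exact h3.symm
    have h6 : D v g⁻¹ = v := by
      have := congrArg (fun x => x * v) h5
      simpa [mul_assoc, hvdef, Units.mul_inv_cancel_left] using this
    rw [← h6]; exact hDmem v g⁻¹
  -- pointwise formula for Φ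
  have hΦapply : ∀ (a : A) (g : G), Φ a g = D a g * (((σ g)⁻¹ : Aˣ) : A) := by
    intro a g
    rw [hΦ, Finsupp.sum_apply, Finsupp.sum]
    by_cases hg : g ∈ (D a).support
    · rw [Finset.sum_eq_single_of_mem g hg]
      · simp
      · intro k _ hk; simp [Finsupp.single_apply, hk]
    · rw [Finsupp.notMem_support_iff.mp hg, zero_mul]
      apply Finset.sum_eq_zero
      intro k hk
      have hne : k ≠ g := fun h => hg (h ▸ hk)
      simp [Finsupp.single_apply, hne]
  -- left inverse Ψ
  have hΨ : ∀ a : A, (Φ a).sum (fun g x => x * (σ g : A)) = a := by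
    intro a
    rw [hΦ, Finsupp.sum_sum_index (h := fun g x => x * ((σ g : Aˣ) : A))
        (fun _ => zero_mul _) (fun _ x y => add_mul x y _)]
    conv_rhs => rw [← hDsum a]
    apply Finsupp.sum_congr
    intro g _
    rw [Finsupp.sum_single_index (h := fun g x => x * ((σ g : Aˣ) : A)) (zero_mul _),
      mul_assoc, Units.inv_mul, mul_one]
  -- now the conjuncts
  refine ⟨?_, hΦadd, ?_, ?_, ?_, ?_, fun g a ha => hΦhom g a ha⟩
  · -- grading
    intro a g
    rw [hΦapply]
    have := hmul g g⁻¹ _ _ (hDmem a g) (hσinv g)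
    simpa using this
  · -- multiplicativity
    intro a b
    have hab : a * b = (D a).sum fun g x => (D b).sum fun g' y => x * y := by
      conv_lhs => rw [← hDsum a, ← hDsum b]
      rw [Finsupp.sum_mul]
      apply Finsupp.sum_congr
      intro g _
      rw [Finsupp.mul_sum]
    have hL : Φ (a * b) = (D a).sum fun g x => (D b).sum fun g' y =>
        Finsupp.single (g * g') (x * y * (((σ (g * g'))⁻¹ : Aˣ) : A)) := by
      rw [← hΦ'c, hab, map_finsuppSum]
      apply Finsupp.sum_congr
      intro g _
      rw [map_finsuppSum]
      apply Finsupp.sum_congr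
      intro g' _
      rw [hΦ'c]
      exact hΦhom (g * g') _ (hmul g g' _ _ (hDmem a g) (hDmem b g'))
    have hsupa : (Φ a).support ⊆ (D a).support := by
      intro g hg
      rw [Finsupp.mem_support_iff] at hg ⊢
      intro h0
      exact hg (by rw [hΦapply, h0, zero_mul])
    have hsupb : (Φ b).support ⊆ (D b).support := by
      intro g hg
      rw [Finsupp.mem_support_iff] at hg ⊢
      intro h0
      exact hg (by rw [hΦapply, h0, zero_mul])
    rw [hcp, hL]
    rw [Finsupp.sum_of_support_subset _ hsupa _ (by intro g _; simp [Finsupp.sum])]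
    rw [Finsupp.sum]
    apply Finset.sum_congr rfl
    intro g hg
    rw [Finsupp.sum_of_support_subset _ hsupb _ (by intro g' _; simp)]
    rw [Finsupp.sum]
    apply Finset.sum_congr rfl
    intro g' hg'
    rw [hΦapply, hΦapply]
    congr 1
    simp [mul_assoc, Units.inv_mul_cancel_left, Units.mul_inv_cancel_left]
  · -- injective
    intro a b hab
    rw [← hΨ a, ← hΨ b, hab]
  · -- surjective onto B-valued
    intro f hf
    refine ⟨f.sum fun g x => x * (σ g : A), ?_⟩
    rw [← hΦ'c, map_finsuppSum]
    conv_rhs => rw [← Finsupp.sum_single f]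
    apply Finsupp.sum_congr
    intro g _
    rw [hΦ'c]
    have hmem : f g * (σ g : A) ∈ ℬ g := by
      have := hmul 1 g _ _ (hf g) (hσ g)
      simpa using this
    rw [hΦhom g _ hmem, mul_assoc, Units.mul_inv, mul_one]
  · -- identity on B
    intro b hb
    rw [hΦhom 1 b hb, hσ1]
    simp
end
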